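/- arXiv:1301.7542 — 2 statements merged into one kernel-verified Lean document; each statement's English description precedes it below -/
import Mathlib

section
/- Let G be a c-regular simple graph on n vertices (so m = cn/2 edges) chosen according to a vertex- and edge-symmetric random graph ensemble with i.i.d. edge weights with law μ on [1,q]. Then the expected number of pairs (s-t separating set X of size u, cut-set vector of Hamming weight v with total weight w) satisfies E[A(u,v,w)] = 2^{v+1} C(n−2,u−1) C(m,v) C(m−v,(cu−v)/2) [f(x)^v]_{x^w} / C(cn, cu), where f(x) = Σ_{i=1}^q μ(i)x^i. -/
/-!
Write `A(u,v,w)` as a sum over the `2 C(n-2,u-1)` s-t separating sets `X` of size `u`. Once the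
`v` cut edges are fixed, the i.i.d. weights contribute `[x^w] f(x)^v`. Let `R` be the `cu`
half-edges at `X`. Conjugating by a permutation of the half-edges shows that the number of
matchings cutting exactly `v` edges at `R` depends only on `#R = cu`, so double counting the pairs
(matching, `cu`-set of half-edges) reduces the count to a single matching with `m` edges. There a
set of half-edges amounts to the pair `(A, B)` of edge sets whose lower, resp. upper, ends it
contains; it has `#A + #B` elements and cuts the edges of `A ∆ B`, and the pairs with
`#(A ∆ B) = v` and `#(A ∩ B) = (cu - v) / 2` number `2^v C(m,v) C(m-v,(cu-v)/2)`.
-/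

open Finset Polynomial
open scoped Classical

/-- The vertex of a half-edge: half-edges `0,…,nc−1`, vertex `x/c`. -/
def vtx (n c : ℕ) (hc : 0 < c) (x : Fin (n * c)) : Fin n :=
  ⟨x.1 / c, (Nat.div_lt_iff_lt_mul hc).mpr x.2⟩

/-- Perfect matchings of `N` half-edges: fixed-point-free involutions. -/
noncomputable def Matchings (N : ℕ) : Finset (Equiv.Perm (Fin N)) :=
  univ.filter (fun π => (∀ x, π x ≠ x) ∧ ∀ x, π (π x) = x)

/-- Crossing edges of the cut `(X, Xᶜ)` in the multigraph given by the matching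
`π`: each edge is represented by its smaller half-edge. -/
noncomputable def crossing (n c : ℕ) (hc : 0 < c) (π : Equiv.Perm (Fin (n * c)))
    (X : Finset (Fin n)) : Finset (Fin (n * c)) :=
  univ.filter (fun x => x < π x ∧ Xor' (vtx n c hc x ∈ X) (vtx n c hc (π x) ∈ X))

/-- `A(u,v,w)` for an instance `(π, wt)`: the number of pairs (cut vector of an
s-t separating set `X` of size `u`, corresponding cut-set vector), the cut-set
having Hamming weight `v` and total edge weight `w` (the weight of an edge is
the weight attached to its smaller half-edge). -/
noncomputable def AA (n c : ℕ) (hc : 0 < c) (s t : Fin n)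
    (π : Equiv.Perm (Fin (n * c))) (wt : Fin (n * c) → ℕ) (u v w : ℕ) : ℕ :=
  (univ.filter (fun X : Finset (Fin n) =>
      Xor' (s ∈ X) (t ∈ X) ∧ X.card = u ∧
      (crossing n c hc π X).card = v ∧
      ∑ x ∈ crossing n c hc π X, wt x = w)).card

open scoped symmDiff

def cutCount (m r v : ℕ) : ℕ :=
  if v ≤ r ∧ (r - v) % 2 = 0 then 2 ^ v * m.choose v * (m - v).choose ((r - v) / 2) else 0

section PairsOfSubsets
variable {β : Type*} [DecidableEq β]

theorem Finset.card_add_card_eq_card_symmDiff_add (A B : Finset β) :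
    #A + #B = #(A ∆ B) + 2 * #(A ∩ B) := by
  rw [symmDiff_eq_sup_sdiff_inf, sup_eq_union, inf_eq_inter,
    card_sdiff_of_subset (inter_subset_union), ← card_union_add_card_inter]
  have := card_le_card (inter_subset_union (s := A) (t := B))
  omega

theorem card_pairs_symmDiff_inter (E : Finset β) (v f : ℕ) :
    #{p ∈ E.powerset ×ˢ E.powerset | #(p.1 ∆ p.2) = v ∧ #(p.1 ∩ p.2) = f}
      = 2 ^ v * (#E).choose v * (#E - v).choose f := by
  let S := (E.powersetCard v).sigma fun D => (E \ D).powersetCard f ×ˢ D.powerset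
  have hS : #S = 2 ^ v * (#E).choose v * (#E - v).choose f := by
    rw [card_sigma, sum_congr rfl fun D hD => by
      rw [card_product, card_powersetCard, card_powerset,
        card_sdiff_of_subset (mem_powersetCard.1 hD).1, (mem_powersetCard.1 hD).2],
      sum_const, card_powersetCard, smul_eq_mul]
    ring
  rw [← hS]
  refine card_nbij' (fun p => ⟨p.1 ∆ p.2, (p.1 ∩ p.2, p.1 \ p.2)⟩)
    (fun x => (x.2.1 ∪ x.2.2, x.2.1 ∪ (x.1 \ x.2.2))) ?_ ?_ ?_ ?_
  all_goals simp only [Set.MapsTo, Set.LeftInvOn, Set.RightInvOn, S, coe_filter, coe_sigma,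
    Set.mem_sigma_iff, mem_coe, mem_powersetCard, mem_product, mem_powerset, Set.mem_ofPred_eq,
    subset_iff, Sigma.forall, Prod.forall]
  · intro A B h
    refine ⟨⟨?_, h.2.1⟩, ⟨?_, h.2.2⟩, ?_⟩ <;> intro x <;> simp [mem_symmDiff] at * <;>
      grind
  · rintro D I T ⟨⟨hD, hDc⟩, ⟨hI, hIc⟩, hT⟩
    have h1 : (I ∪ T) ∆ (I ∪ (D \ T)) = D := by
      ext x; simp [mem_symmDiff] at *; grind
    have h2 : (I ∪ T) ∩ (I ∪ (D \ T)) = I := by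
      ext x; simp at *; grind
    simp only [h1, h2, hDc, hIc, mem_union, mem_sdiff, and_true]
    constructor <;> intro x <;> simp at * <;> grind
  · intro A B _
    ext x <;> simp [mem_symmDiff] <;> tauto
  · rintro D I T ⟨-, ⟨hI, -⟩, hT⟩
    simp at hI
    ext x <;> simp [mem_symmDiff] <;> grind

theorem card_pairs_add_card_symmDiff (E : Finset β) (r v : ℕ) :
    #{p ∈ E.powerset ×ˢ E.powerset | #p.1 + #p.2 = r ∧ #(p.1 ∆ p.2) = v} =
      cutCount #E r v := by
  unfold cutCount
  split_ifs with h
  · rw [← card_pairs_symmDiff_inter]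
    refine congrArg card (filter_congr fun p _ => ?_)
    have := card_add_card_eq_card_symmDiff_add p.1 p.2
    omega
  · refine card_eq_zero.2 (filter_eq_empty_iff.2 fun p _ hp => h ?_)
    have := card_add_card_eq_card_symmDiff_add p.1 p.2
    omega

end PairsOfSubsets

section Involution
variable {α : Type*} {π : Equiv.Perm α}

theorem conj_fixedPointFree (hfix : ∀ x, π x ≠ x) (σ : Equiv.Perm α) :
    ∀ x, (σ * π * σ⁻¹) x ≠ x := fun x h =>
  hfix (σ⁻¹ x) (by simpa using congrArg (⇑σ⁻¹) h)

theorem conj_involutive (hinv : Function.Involutive π) (σ : Equiv.Perm α) :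
    Function.Involutive (σ * π * σ⁻¹) := fun x => by simp [hinv _]

theorem mem_image_iff_of_involutive [DecidableEq α] (hinv : Function.Involutive π)
    {B : Finset α} {x : α} : x ∈ B.image π ↔ π x ∈ B := by
  refine ⟨fun h => ?_, fun h => mem_image.2 ⟨π x, h, hinv x⟩⟩
  obtain ⟨b, hb, rfl⟩ := mem_image.1 h
  rwa [hinv]

theorem card_eq_two_mul_card_filter_lt_apply [LinearOrder α] (hfix : ∀ x, π x ≠ x)
    (hinv : Function.Involutive π) (S : Finset α) (hS : ∀ x ∈ S, π x ∈ S) :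
    #S = 2 * #{x ∈ S | x < π x} := by
  rw [← card_filter_add_card_filter_not (p := fun x => x < π x), two_mul, add_comm]
  congr 1
  refine card_nbij' π π ?_ ?_ (fun x _ => hinv x) (fun x _ => hinv x)
  · intro x hx
    simp only [coe_filter, Set.mem_ofPred_eq, not_lt] at hx ⊢
    exact ⟨hS x hx.1, by rw [hinv]; exact hx.2.lt_of_ne (hfix x)⟩
  · intro x hx
    simp only [coe_filter, Set.mem_ofPred_eq, not_lt] at hx ⊢
    exact ⟨hS x hx.1, by rw [hinv]; exact hx.2.le⟩

variable [Fintype α]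

noncomputable def boundary (π : Equiv.Perm α) (R : Finset α) : Finset α :=
  {x | Xor' (x ∈ R) (π x ∈ R)}

theorem boundary_conj (σ : Equiv.Perm α) (R : Finset α) :
    boundary (σ * π * σ⁻¹) (R.map σ.toEmbedding) = (boundary π R).map σ.toEmbedding := by
  ext x
  simp [boundary, mem_map_equiv]

variable [LinearOrder α]

def lowerEnds (π : Equiv.Perm α) : Finset α := {x | x < π x}

noncomputable def cut (π : Equiv.Perm α) (R : Finset α) : Finset α :=
  {x | x < π x ∧ Xor' (x ∈ R) (π x ∈ R)}

theorem mem_lowerEnds {x : α} : x ∈ lowerEnds π ↔ x < π x := by simp [lowerEnds]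

theorem card_eq_two_mul_card_lowerEnds (hfix : ∀ x, π x ≠ x) (hinv : Function.Involutive π) :
    Fintype.card α = 2 * #(lowerEnds π) :=
  card_eq_two_mul_card_filter_lt_apply hfix hinv univ (fun _ _ => mem_univ _)

theorem card_boundary (hfix : ∀ x, π x ≠ x) (hinv : Function.Involutive π) (R : Finset α) :
    #(boundary π R) = 2 * #(cut π R) := by
  rw [card_eq_two_mul_card_filter_lt_apply hfix hinv]
  · congr 2
    ext x
    simp [boundary, cut, and_comm]
  · intro x hx
    simp only [boundary, mem_filter, mem_univ, true_and, hinv x] at hx ⊢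
    exact hx.symm

theorem card_cut_conj (hfix : ∀ x, π x ≠ x) (hinv : Function.Involutive π)
    (σ : Equiv.Perm α) (R : Finset α) : #(cut (σ * π * σ⁻¹) (R.map σ.toEmbedding)) = #(cut π R) := by
  have h := card_boundary (conj_fixedPointFree hfix σ) (conj_involutive hinv σ)
    (R.map σ.toEmbedding)
  rw [boundary_conj, card_map, card_boundary hfix hinv] at h
  omega

theorem cut_union_image (hinv : Function.Involutive π) {A B : Finset α}
    (hA : A ⊆ lowerEnds π) (hB : B ⊆ lowerEnds π) : cut π (A ∪ B.image π) = A ∆ B := by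
  ext x
  simp only [subset_iff, mem_lowerEnds] at hA hB
  simp only [cut, mem_filter, mem_univ, true_and, mem_symmDiff, mem_union,
    mem_image_iff_of_involutive hinv, hinv x, Xor']
  have := hinv x
  grind

theorem card_union_image (hinv : Function.Involutive π) {A B : Finset α}
    (hA : A ⊆ lowerEnds π) (hB : B ⊆ lowerEnds π) : #(A ∪ B.image π) = #A + #B := by
  rw [card_union_of_disjoint, card_image_of_injective _ π.injective]
  simp only [subset_iff, mem_lowerEnds] at hA hB
  rw [disjoint_left]
  intro x hx
  simp only [mem_image_iff_of_involutive hinv]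
  have := hinv x
  grind

theorem union_image_eq_self (hfix : ∀ x, π x ≠ x) (hinv : Function.Involutive π)
    (R : Finset α) :
    {x ∈ lowerEnds π | x ∈ R} ∪ {x ∈ lowerEnds π | π x ∈ R}.image π = R := by
  ext x
  simp only [mem_union, mem_filter, mem_lowerEnds, mem_image_iff_of_involutive hinv, hinv x]
  have := hfix x
  grind

theorem card_filter_card_cut_eq_card_pairs (hfix : ∀ x, π x ≠ x)
    (hinv : Function.Involutive π) (r v : ℕ) :
    #{R ∈ powersetCard r univ | #(cut π R) = v} =
      #{p ∈ (lowerEnds π).powerset ×ˢ (lowerEnds π).powerset |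
        #p.1 + #p.2 = r ∧ #(p.1 ∆ p.2) = v} := by
  refine card_nbij' (fun R => ({x ∈ lowerEnds π | x ∈ R}, {x ∈ lowerEnds π | π x ∈ R}))
    (fun p => p.1 ∪ p.2.image π) ?_ ?_ ?_ ?_
  · intro R hR
    simp only [coe_filter, mem_powersetCard, Set.mem_ofPred_eq] at hR ⊢
    rw [← union_image_eq_self hfix hinv R, card_union_image hinv (filter_subset _ _)
      (filter_subset _ _), cut_union_image hinv (filter_subset _ _) (filter_subset _ _)] at hR
    simpa [mem_product, mem_powerset] using hR
  · rintro ⟨A, B⟩ h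
    simp only [coe_filter, mem_product, mem_powerset, Set.mem_ofPred_eq] at h ⊢
    obtain ⟨⟨hA, hB⟩, hcard, hv⟩ := h
    simp [card_union_image hinv hA hB, cut_union_image hinv hA hB, hcard, hv]
  · intro R _
    exact union_image_eq_self hfix hinv R
  · rintro ⟨A, B⟩ h
    simp only [coe_filter, mem_product, mem_powerset, Set.mem_ofPred_eq] at h
    obtain ⟨⟨hA, hB⟩, -⟩ := h
    simp only [subset_iff, mem_lowerEnds] at hA hB
    simp only [Prod.mk.injEq]
    constructor <;> ext x <;>
      simp only [mem_filter, mem_lowerEnds, mem_union, mem_image_iff_of_involutive hinv,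
        hinv x] <;>
      have := hinv x <;> grind

theorem card_filter_card_cut (hfix : ∀ x, π x ≠ x) (hinv : Function.Involutive π) {m : ℕ}
    (hm : Fintype.card α = 2 * m) (r v : ℕ) :
    #{R ∈ powersetCard r univ | #(cut π R) = v} = cutCount m r v := by
  rw [card_filter_card_cut_eq_card_pairs hfix hinv, card_pairs_add_card_symmDiff]
  congr
  have := card_eq_two_mul_card_lowerEnds hfix hinv
  omega

end Involution

theorem Finset.exists_perm_map_eq {α : Type*} [Fintype α] {R R' : Finset α} (h : #R = #R') :
    ∃ σ : Equiv.Perm α, R.map σ.toEmbedding = R' := by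
  obtain ⟨σ, hσ⟩ := (Set.powersetCard.isPretransitive (α := α) (n := #R)).exists_smul_eq
    ⟨R, rfl⟩ ⟨R', h.symm⟩
  refine ⟨σ, ?_⟩
  simpa [Set.powersetCard.coe_smul, Finset.smul_finset_def, map_eq_image] using
    congrArg Subtype.val hσ

theorem sum_piFinset_prod_mul_ite_eq_coeff_pow {ι : Type*} [Fintype ι] [DecidableEq ι]
    (V : Finset ℕ) (μ : ℕ → ℝ) (hμ : ∑ i ∈ V, μ i = 1) (S : Finset ι) (w : ℕ) :
    ∑ wt ∈ Fintype.piFinset (fun _ : ι => V),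
      (∏ x, μ (wt x)) * (if ∑ x ∈ S, wt x = w then (1 : ℝ) else 0)
    = ((∑ i ∈ V, C (μ i) * X ^ i) ^ #S).coeff w := by
  -- Both sides come from `∏ₓ ∑ᵢ μᵢ X^([x ∈ S] i)`: it is the `#S`-th power because the weights
  -- sum to `1`, and expanding it gives the sum over `wt`.
  have hfactor : ∀ x, ∑ i ∈ V, C (μ i) * (if x ∈ S then X ^ i else 1) =
      if x ∈ S then ∑ i ∈ V, C (μ i) * X ^ i else 1 := by
    intro x
    split_ifs
    · rfl
    · simp only [mul_one, ← map_sum, hμ, map_one]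
  have hterm : ∀ wt : ι → ℕ, ∏ x, C (μ (wt x)) * (if x ∈ S then X ^ wt x else 1) =
      C (∏ x, μ (wt x)) * X ^ ∑ x ∈ S, wt x := by
    intro wt
    rw [prod_mul_distrib, ← map_prod, prod_ite_mem, univ_inter, prod_pow_eq_pow_sum]
  have hprod : ∏ x, ∑ i ∈ V, C (μ i) * (if x ∈ S then X ^ i else 1) =
      (∑ i ∈ V, C (μ i) * X ^ i) ^ #S := by
    rw [prod_congr rfl fun x _ => hfactor x, prod_ite_mem, univ_inter, prod_const]
  rw [← hprod, prod_univ_sum, finsetSum_coeff]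
  refine sum_congr rfl fun wt _ => ?_
  rw [hterm, coeff_C_mul_X_pow]
  split_ifs with h1 h2 h2 <;> simp_all [eq_comm]

section Matchings
variable {N : ℕ}

theorem mem_Matchings {π : Equiv.Perm (Fin N)} :
    π ∈ Matchings N ↔ (∀ x, π x ≠ x) ∧ Function.Involutive π := by
  simp [Matchings, Function.Involutive]

theorem conj_mem_Matchings {π : Equiv.Perm (Fin N)} (hπ : π ∈ Matchings N)
    (σ : Equiv.Perm (Fin N)) : σ * π * σ⁻¹ ∈ Matchings N := by
  rw [mem_Matchings] at hπ ⊢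
  exact ⟨conj_fixedPointFree hπ.1 σ, conj_involutive hπ.2 σ⟩

theorem card_filter_Matchings_card_cut_le {R R' : Finset (Fin N)} (h : #R = #R') (v : ℕ) :
    #{π ∈ Matchings N | #(cut π R) = v} ≤ #{π ∈ Matchings N | #(cut π R') = v} := by
  obtain ⟨σ, rfl⟩ := exists_perm_map_eq h
  refine card_le_card_of_injOn (fun π => σ * π * σ⁻¹) (fun π hπ => ?_) (fun π _ π' _ h => ?_)
  · simp only [coe_filter, Set.mem_ofPred_eq] at hπ ⊢
    have hM := mem_Matchings.1 hπ.1
    exact ⟨conj_mem_Matchings hπ.1 σ, by rw [card_cut_conj hM.1 hM.2, hπ.2]⟩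
  · simpa using h

theorem card_filter_Matchings_card_cut_congr {R R' : Finset (Fin N)} (h : #R = #R') (v : ℕ) :
    #{π ∈ Matchings N | #(cut π R) = v} = #{π ∈ Matchings N | #(cut π R') = v} :=
  (card_filter_Matchings_card_cut_le h v).antisymm (card_filter_Matchings_card_cut_le h.symm v)

theorem card_filter_Matchings_card_cut_mul_choose {m r : ℕ} (hm : 2 * m = N)
    (R : Finset (Fin N)) (hR : #R = r) (v : ℕ) :
    #{π ∈ Matchings N | #(cut π R) = v} * N.choose r = #(Matchings N) * cutCount m r v := by
  have hcount := sum_card_bipartiteAbove_eq_sum_card_bipartiteBelow (s := Matchings N)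
    (t := powersetCard r univ) (r := fun π R' => #(cut π R') = v)
  simp only [bipartiteAbove, bipartiteBelow] at hcount
  rw [sum_congr rfl fun π hπ => card_filter_card_cut (mem_Matchings.1 hπ).1
      (mem_Matchings.1 hπ).2 (by rw [Fintype.card_fin, hm]) r v,
    sum_congr rfl fun R' hR' => card_filter_Matchings_card_cut_congr
      ((mem_powersetCard.1 hR').2.trans hR.symm) v,
    sum_const, sum_const, card_powersetCard, card_univ, Fintype.card_fin, smul_eq_mul,
    smul_eq_mul] at hcount
  rw [mul_comm, ← hcount]

end Matchings

theorem revPerm_mem_Matchings {m N : ℕ} (hm : 2 * m = N) : Fin.revPerm ∈ Matchings N := by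
  refine mem_Matchings.2 ⟨fun x h => ?_, Fin.rev_involutive⟩
  have := congrArg Fin.val h
  simp only [Fin.revPerm_apply, Fin.val_rev] at this
  omega

section Separating
variable {α : Type*} [Fintype α] {s t : α} {u : ℕ}

theorem card_filter_mem_and_notMem (hst : s ≠ t) (hu : 1 ≤ u) :
    #{X : Finset α | (s ∈ X ∧ t ∉ X) ∧ #X = u} = (Fintype.card α - 2).choose (u - 1) := by
  have hcard : #({s, t}ᶜ : Finset α) = Fintype.card α - 2 := by
    rw [card_compl, card_pair hst]
  rw [← hcard, ← card_powersetCard]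
  refine card_nbij' (·.erase s) (insert s) ?_ ?_ ?_ ?_
  · intro X hX
    simp only [coe_filter, mem_univ, true_and, Set.mem_ofPred_eq, mem_coe,
      mem_powersetCard] at hX ⊢
    refine ⟨fun x hx => ?_, by rw [card_erase_of_mem hX.1.1, hX.2]⟩
    simp only [mem_erase] at hx
    simp only [mem_compl, mem_insert, mem_singleton]
    grind
  · intro X hX
    simp only [coe_filter, mem_univ, true_and, Set.mem_ofPred_eq, mem_coe,
      mem_powersetCard] at hX ⊢
    have hs : s ∉ X := fun h => by simpa using hX.1 h
    have ht : t ∉ X := fun h => by simpa using hX.1 h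
    refine ⟨⟨mem_insert_self s X, by simp [hst.symm, ht]⟩, ?_⟩
    rw [card_insert_of_notMem hs, hX.2]
    omega
  · intro X hX
    simp only [coe_filter, mem_univ, true_and, Set.mem_ofPred_eq] at hX
    exact insert_erase hX.1.1
  · intro X hX
    simp only [mem_coe, mem_powersetCard] at hX
    exact erase_insert fun h => by simpa using hX.1 h

theorem card_filter_xor_mem (hst : s ≠ t) (hu : 1 ≤ u) :
    #{X : Finset α | Xor' (s ∈ X) (t ∈ X) ∧ #X = u} =
      2 * (Fintype.card α - 2).choose (u - 1) := by
  rw [two_mul]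
  nth_rw 2 [← card_filter_mem_and_notMem hst.symm hu]
  rw [← card_filter_mem_and_notMem hst hu,
    ← card_union_of_disjoint (disjoint_filter.2 fun X _ h h' => h'.1.2 h.1.1), ← filter_or]
  refine congrArg card (filter_congr fun X _ => ?_)
  simp only [Xor', xor_def]
  tauto

end Separating

theorem card_filter_vtx_mem {n c : ℕ} (hc : 0 < c) (X : Finset (Fin n)) :
    #{x : Fin (n * c) | vtx n c hc x ∈ X} = c * #X := by
  have hfibers : ({x | vtx n c hc x ∈ X} : Finset (Fin (n * c))) =
      (X ×ˢ univ).map finProdFinEquiv.toEmbedding := by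
    ext x
    rw [mem_filter]
    simp [mem_map_equiv, vtx, Fin.divNat]
  rw [hfibers, card_map, card_product, card_univ, Fintype.card_fin, mul_comm]

theorem crossing_eq_cut {n c : ℕ} (hc : 0 < c) (π : Equiv.Perm (Fin (n * c)))
    (X : Finset (Fin n)) : crossing n c hc π X = cut π {x | vtx n c hc x ∈ X} := by
  ext x
  simp [crossing, cut]

theorem sum_weights_mul_AA {n c : ℕ} (hc : 0 < c) (s t : Fin n) (π : Equiv.Perm (Fin (n * c)))
    (u v w : ℕ) (V : Finset ℕ) (μ : ℕ → ℝ) (hμ : ∑ i ∈ V, μ i = 1) :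
    ∑ wt ∈ Fintype.piFinset (fun _ : Fin (n * c) => V),
        (∏ x, μ (wt x)) * (AA n c hc s t π wt u v w : ℝ)
      = ∑ S : Finset (Fin n) with Xor' (s ∈ S) (t ∈ S) ∧ #S = u,
          if #(crossing n c hc π S) = v then
            ((∑ i ∈ V, C (μ i) * X ^ i) ^ v).coeff w else 0 := by
  have hAA : ∀ wt, (AA n c hc s t π wt u v w : ℝ) =
      ∑ S : Finset (Fin n) with Xor' (s ∈ S) (t ∈ S) ∧ #S = u,
        if #(crossing n c hc π S) = v then
          (if ∑ x ∈ crossing n c hc π S, wt x = w then 1 else 0) else 0 := by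
    intro wt
    rw [AA, card_filter, sum_filter]
    push_cast
    refine sum_congr rfl fun S _ => ?_
    simp only [ite_and]
  simp_rw [hAA, mul_sum]
  rw [sum_comm]
  refine sum_congr rfl fun S _ => ?_
  split_ifs with h
  · rw [← h, ← sum_piFinset_prod_mul_ite_eq_coeff_pow V μ hμ]
  · simp

theorem stmt14_general (n c q m : ℕ) (hc : 0 < c) (hm : 2 * m = n * c)
    (μ : ℕ → ℝ)
    (hμ1 : ∑ i ∈ Finset.Icc 1 q, μ i = 1)
    (s t : Fin n) (hst : s ≠ t)
    (u v w : ℕ) (hu1 : 1 ≤ u) (hu2 : u ≤ n - 1) :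
    (∑ π ∈ Matchings (n * c),
      ∑ wt ∈ Fintype.piFinset (fun _ : Fin (n * c) => Finset.Icc 1 q),
        ((Matchings (n * c)).card : ℝ)⁻¹ * (∏ x, μ (wt x)) *
          (AA n c hc s t π wt u v w : ℝ))
    = 2 ^ (v + 1) * (Nat.choose (n - 2) (u - 1) : ℝ) * (Nat.choose m v : ℝ) *
        (if v ≤ c * u ∧ (c * u - v) % 2 = 0 then
          (Nat.choose (m - v) ((c * u - v) / 2) : ℝ) else 0) *
        (((∑ i ∈ Finset.Icc 1 q, Polynomial.C (μ i) * Polynomial.X ^ i) ^ v).coeff w)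
      / (Nat.choose (n * c) (c * u) : ℝ) := by
  set pw := ((∑ i ∈ Finset.Icc 1 q, C (μ i) * X ^ i) ^ v).coeff w
  have hM : (#(Matchings (n * c)) : ℝ) ≠ 0 :=
    Nat.cast_ne_zero.2 (card_ne_zero_of_mem (revPerm_mem_Matchings hm))
  have hcu : c * u ≤ n * c := by rw [mul_comm c u]; exact Nat.mul_le_mul_right c (by omega)
  have hchoose : ((n * c).choose (c * u) : ℝ) ≠ 0 := Nat.cast_ne_zero.2 (Nat.choose_pos hcu).ne'
  calc _ = (#(Matchings (n * c)) : ℝ)⁻¹ *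
          ∑ X : Finset (Fin n) with Xor' (s ∈ X) (t ∈ X) ∧ #X = u,
            (#{π ∈ Matchings (n * c) | #(crossing n c hc π X) = v} : ℝ) * pw := by
        simp_rw [mul_assoc, ← mul_sum, sum_weights_mul_AA hc s t _ u v w _ μ hμ1]
        rw [sum_comm]
        refine congrArg _ (sum_congr rfl fun X _ => ?_)
        rw [← sum_filter, sum_const, nsmul_eq_mul]
    _ = ∑ X : Finset (Fin n) with Xor' (s ∈ X) (t ∈ X) ∧ #X = u,
          (cutCount m (c * u) v : ℝ) * pw / (n * c).choose (c * u) := by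
        rw [mul_sum]
        refine sum_congr rfl fun X hX => ?_
        have hcount := card_filter_Matchings_card_cut_mul_choose hm {x | vtx n c hc x ∈ X}
          (by rw [card_filter_vtx_mem, (mem_filter.1 hX).2.2]) v
        replace hcount := congrArg (Nat.cast : ℕ → ℝ) hcount
        push_cast at hcount
        simp_rw [crossing_eq_cut]
        field_simp
        linear_combination pw * hcount
    _ = _ := by
        rw [sum_const, card_filter_xor_mem hst hu1, Fintype.card_fin, nsmul_eq_mul, cutCount]
        split_ifs <;> push_cast <;> ring

/-- Expected `A(u,v,w)` over the `c`-regular configuration-model ensemble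
(uniform perfect matching of the `nc` half-edges, i.i.d. edge weights with law
`μ` on `[1,q]`):
`E[A(u,v,w)] = 2^{v+1} C(n−2,u−1) C(m,v) C(m−v,(cu−v)/2) [f^v]_{x^w} / C(cn,cu)`,
with `f(x) = Σ_{i=1}^q μ(i) x^i`, `m = cn/2`, and the binomial coefficient
`C(m−v,(cu−v)/2)` interpreted as `0` unless `(cu−v)/2` is a nonnegative
integer. -/
theorem stmt14 (n c q m : ℕ) (hc : 0 < c) (hm : 2 * m = n * c) (hq : 1 ≤ q)
    (μ : ℕ → ℝ) (hμ0 : ∀ i ∈ Finset.Icc 1 q, 0 ≤ μ i)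
    (hμ1 : ∑ i ∈ Finset.Icc 1 q, μ i = 1)
    (s t : Fin n) (hst : s ≠ t)
    (u v w : ℕ) (hu1 : 1 ≤ u) (hu2 : u ≤ n - 1) (hv : v ≤ m) :
    (∑ π ∈ Matchings (n * c),
      ∑ wt ∈ Fintype.piFinset (fun _ : Fin (n * c) => Finset.Icc 1 q),
        ((Matchings (n * c)).card : ℝ)⁻¹ * (∏ x, μ (wt x)) *
          (AA n c hc s t π wt u v w : ℝ))
    = 2 ^ (v + 1) * (Nat.choose (n - 2) (u - 1) : ℝ) * (Nat.choose m v : ℝ) *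
        (if v ≤ c * u ∧ (c * u - v) % 2 = 0 then
          (Nat.choose (m - v) ((c * u - v) / 2) : ℝ) else 0) *
        (((∑ i ∈ Finset.Icc 1 q, Polynomial.C (μ i) * Polynomial.X ^ i) ^ v).coeff w)
      / (Nat.choose (n * c) (c * u) : ℝ) :=
  stmt14_general n c q m hc hm μ hμ1 s t hst u v w hu1 hu2
end

section
/- In the configuration model with n vertices having prescribed degrees (n·d_i vertices of degree i, 2m half-edges total), conditioned on a fixed subset S of vertices of size u with total degree h, the probability that a uniformly random perfect matching of the 2m half-edges produces exactly v edges between S and its complement—where these v crossing edges form a prescribed set of v function-node positions—equals 2^v C(m−v,(h−v)/2) / C(2m,h), independent of which size-u set S with total degree h is chosen. -/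
/-!
The event depends on `σ` only through the image `σ(A)` of the active half-edges, and every
`h`-subset of the slots is that image for exactly `h! (2m - h)!` of the `(2m)!` bijections, so
the probability is the number of admissible images divided by `C(2m, h)`. A set `B` of slots
crosses exactly at `T` iff its second row is its first row `R` with the columns of `T` toggled,
so admissible `B` correspond to arbitrary `R`, and `|B| = |T| + 2 |R \ T|`: the `2^v` choices of
`R ∩ T` and the `C(m - v, (h - v)/2)` choices of `R \ T` give the numerator.
-/

open Finset

namespace Equiv

variable {α β : Type*}

def ofSubtypeCongr {p : α → Prop} {q : β → Prop} [DecidablePred p] [DecidablePred q]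
    (e : {a // p a} ≃ {b // q b}) (f : {a // ¬ p a} ≃ {b // ¬ q b}) : α ≃ β :=
  (sumCompl p).symm.trans ((e.sumCongr f).trans (sumCompl q))

theorem ofSubtypeCongr_apply_of_pos {p : α → Prop} {q : β → Prop} [DecidablePred p]
    [DecidablePred q] (e : {a // p a} ≃ {b // q b}) (f : {a // ¬ p a} ≃ {b // ¬ q b})
    {a : α} (h : p a) : ofSubtypeCongr e f a = e ⟨a, h⟩ := by
  simp [ofSubtypeCongr, h]

theorem ofSubtypeCongr_apply_of_neg {p : α → Prop} {q : β → Prop} [DecidablePred p]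
    [DecidablePred q] (e : {a // p a} ≃ {b // q b}) (f : {a // ¬ p a} ≃ {b // ¬ q b})
    {a : α} (h : ¬ p a) : ofSubtypeCongr e f a = f ⟨a, h⟩ := by
  simp [ofSubtypeCongr, h]

def subtypeIffEquivProd (p : α → Prop) (q : β → Prop) [DecidablePred p] [DecidablePred q] :
    {σ : α ≃ β // ∀ a, p a ↔ q (σ a)} ≃
      ({a // p a} ≃ {b // q b}) × ({a // ¬ p a} ≃ {b // ¬ q b}) where
  toFun σ := (σ.1.subtypeEquiv σ.2, σ.1.subtypeEquiv fun a => not_congr (σ.2 a))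
  invFun ef := ⟨ofSubtypeCongr ef.1 ef.2, fun a => by
    by_cases h : p a
    · simpa [ofSubtypeCongr_apply_of_pos _ _ h, h] using (ef.1 ⟨a, h⟩).2
    · simpa [ofSubtypeCongr_apply_of_neg _ _ h, h] using (ef.2 ⟨a, h⟩).2⟩
  left_inv σ := by
    ext a
    by_cases h : p a
    · simp [ofSubtypeCongr_apply_of_pos _ _ h]
    · simp [ofSubtypeCongr_apply_of_neg _ _ h]
  right_inv ef := by
    ext ⟨a, ha⟩
    · simp [ofSubtypeCongr_apply_of_pos _ _ ha]
    · simp [ofSubtypeCongr_apply_of_neg _ _ ha]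

end Equiv

section EquivMap

open Nat

variable {α β : Type*} [Fintype α] [Fintype β] [DecidableEq α] [DecidableEq β]

theorem card_filter_equiv_map_eq {A : Finset α} {B : Finset β} (hAB : #A = #B)
    (hαβ : Fintype.card α = Fintype.card β) :
    #{σ : α ≃ β | A.map σ.toEmbedding = B} = (#A)! * (Fintype.card α - #A)! := by
  have hmap : ∀ σ : α ≃ β, A.map σ.toEmbedding = B ↔ ∀ a, a ∈ A ↔ σ a ∈ B := by
    intro σ
    refine ⟨fun h a => by simp [← h], fun h => ?_⟩
    refine eq_of_subset_of_card_le (fun b hb => ?_) (by simp [hAB])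
    obtain ⟨a, ha, rfl⟩ := mem_map.mp hb
    exact (h a).1 ha
  rw [filter_congr fun σ _ => hmap σ, ← Fintype.card_subtype,
    Fintype.card_congr (Equiv.subtypeIffEquivProd (· ∈ A) (· ∈ B)), Fintype.card_prod,
    Fintype.card_equiv (Fintype.equivOfCardEq (by simp [hAB])),
    Fintype.card_equiv (Fintype.equivOfCardEq (by simp [Fintype.card_subtype_compl, hAB, hαβ]))]
  simp [Fintype.card_subtype_compl]

theorem card_filter_equiv_map (A : Finset α) (P : Finset β → Prop) [DecidablePred P]
    (hαβ : Fintype.card α = Fintype.card β) :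
    #{σ : α ≃ β | P (A.map σ.toEmbedding)}
      = #{B | #B = #A ∧ P B} * ((#A)! * (Fintype.card α - #A)!) := by
  rw [card_eq_sum_card_fiberwise (f := fun σ : α ≃ β => A.map σ.toEmbedding)
    (t := {B | #B = #A ∧ P B}) (fun σ hσ => by simp_all), ← smul_eq_mul, ← sum_const]
  refine sum_congr rfl fun B hB => ?_
  rw [mem_filter] at hB
  rw [filter_filter, ← card_filter_equiv_map_eq hB.2.1.symm hαβ]
  congr 1
  exact filter_congr fun σ _ => ⟨And.right, fun h => ⟨h ▸ hB.2.2, h⟩⟩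

end EquivMap

section TwoRows

open scoped symmDiff

variable {ι : Type*} [DecidableEq ι]

def CrossesExactly (T : Finset ι) (B : Finset (ι × Fin 2)) : Prop :=
  ∀ j, j ∈ T ↔ #{p ∈ B | p.1 = j} = 1

def twoRow (T R : Finset ι) : Finset (ι × Fin 2) := R ×ˢ {0} ∪ (R ∆ T) ×ˢ {1}

variable {T R : Finset ι} {B : Finset (ι × Fin 2)} {j : ι}

@[simp]
theorem mem_twoRow_zero : (j, 0) ∈ twoRow T R ↔ j ∈ R := by
  simp [twoRow]

@[simp]
theorem mem_twoRow_one : (j, 1) ∈ twoRow T R ↔ (j ∈ R ↔ j ∉ T) := by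
  simp only [twoRow, mem_union, mem_product, mem_singleton, mem_symmDiff]
  tauto

theorem card_filter_fst_eq (B : Finset (ι × Fin 2)) (j : ι) :
    #{p ∈ B | p.1 = j} = (if (j, 0) ∈ B then 1 else 0) + (if (j, 1) ∈ B then 1 else 0) := by
  have : {p ∈ B | p.1 = j} = {q ∈ ({(j, 0), (j, 1)} : Finset (ι × Fin 2)) | q ∈ B} := by
    ext ⟨i, y⟩
    fin_cases y <;> simp [and_comm, eq_comm]
  rw [this, card_filter, sum_pair (by simp)]

theorem card_twoRow : #(twoRow T R) = #T + 2 * #(R \ T) := by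
  have hdisj : Disjoint (R ×ˢ ({0} : Finset (Fin 2))) ((R ∆ T) ×ˢ {1}) :=
    disjoint_product.mpr (Or.inr (by simp))
  rw [twoRow, card_union_of_disjoint hdisj, card_product, card_product, card_singleton,
    card_singleton, symmDiff_def, sup_eq_union, card_union_of_disjoint disjoint_sdiff_sdiff,
    ← card_sdiff_add_card_inter R T, ← card_sdiff_add_card_inter T R, inter_comm]
  ring

variable [Fintype ι]

instance : DecidablePred (CrossesExactly T) := fun B => by
  unfold CrossesExactly; infer_instance

def rowZero (B : Finset (ι × Fin 2)) : Finset ι := {j | (j, 0) ∈ B}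

@[simp]
theorem rowZero_twoRow : rowZero (twoRow T R) = R := by
  ext j
  simp [rowZero]

theorem crossesExactly_iff_eq_twoRow : CrossesExactly T B ↔ B = twoRow T (rowZero B) := by
  have hcol : ∀ j, (j ∈ T ↔ #{p ∈ B | p.1 = j} = 1) ↔ ((j, 1) ∈ B ↔ ((j, 0) ∈ B ↔ j ∉ T)) := by
    intro j
    rw [card_filter_fst_eq]
    by_cases h0 : (j, 0) ∈ B <;> by_cases h1 : (j, 1) ∈ B <;> simp [h0, h1]
  rw [CrossesExactly, forall_congr' hcol, Finset.ext_iff, Prod.forall]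
  refine forall_congr' fun j => ?_
  simp [Fin.forall_fin_two, rowZero]

theorem card_filter_crossesExactly (T : Finset ι) (h : ℕ) :
    #{B : Finset (ι × Fin 2) | #B = h ∧ CrossesExactly T B} = #{R | #T + 2 * #(R \ T) = h} := by
  refine card_nbij' rowZero (twoRow T) (fun B hB => ?_) (fun R hR => ?_) (fun B hB => ?_)
    (fun R _ => rowZero_twoRow)
  · simp only [coe_filter, mem_univ, true_and, Set.mem_ofPred_eq] at hB ⊢
    rw [← card_twoRow, ← crossesExactly_iff_eq_twoRow.mp hB.2, hB.1]
  · simp only [coe_filter, mem_univ, true_and, Set.mem_ofPred_eq] at hR ⊢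
    rw [crossesExactly_iff_eq_twoRow, rowZero_twoRow, card_twoRow]
    exact ⟨hR, rfl⟩
  · simp only [coe_filter, mem_univ, true_and, Set.mem_ofPred_eq] at hB
    exact (crossesExactly_iff_eq_twoRow.mp hB.2).symm

theorem card_filter_card_sdiff_eq (T : Finset ι) (k : ℕ) :
    #{R : Finset ι | #(R \ T) = k} = 2 ^ #T * (Fintype.card ι - #T).choose k := by
  rw [← card_powerset, ← card_compl, ← card_powersetCard, ← card_product]
  refine card_nbij' (fun R => (R ∩ T, R \ T)) (fun p => p.1 ∪ p.2) ?_ ?_ ?_ ?_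
  · intro R hR
    simp only [coe_filter, mem_univ, true_and, Set.mem_ofPred_eq] at hR
    simp only [coe_product, Set.mem_prod, mem_coe, mem_powerset, mem_powersetCard]
    exact ⟨inter_subset_right, fun x hx => mem_compl.mpr (mem_sdiff.mp hx).2, hR⟩
  · rintro ⟨W, U⟩ hWU
    simp only [coe_product, Set.mem_prod, mem_coe, mem_powerset, mem_powersetCard] at hWU
    simp only [coe_filter, mem_univ, true_and, Set.mem_ofPred_eq]
    rw [← hWU.2.2]
    congr 1
    ext x
    have := @hWU.1 x
    have := @hWU.2.1 x
    simp only [mem_sdiff, mem_union, mem_compl] at *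
    tauto
  · intro R _
    exact sup_inf_sdiff R T
  · rintro ⟨W, U⟩ hWU
    simp only [coe_product, Set.mem_prod, mem_coe, mem_powerset, mem_powersetCard] at hWU
    have hW := @hWU.1
    have hU := @hWU.2.1
    simp only [Prod.mk.injEq]
    constructor <;> ext x <;> have := @hW x <;> have := @hU x <;>
      simp only [mem_sdiff, mem_union, mem_inter, mem_compl] at * <;> tauto

theorem card_filter_card_eq_crossesExactly (T : Finset ι) (h : ℕ) :
    #{B : Finset (ι × Fin 2) | #B = h ∧ CrossesExactly T B}
      = if #T ≤ h ∧ (h - #T) % 2 = 0 then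
          2 ^ #T * (Fintype.card ι - #T).choose ((h - #T) / 2) else 0 := by
  rw [card_filter_crossesExactly]
  split_ifs with hh
  · rw [← card_filter_card_sdiff_eq]
    exact congrArg card (filter_congr fun R _ => by omega)
  · exact card_eq_zero.mpr (filter_eq_empty_iff.mpr fun R _ => by omega)

end TwoRows

theorem stmt16_general (m v h : ℕ) (hh : h ≤ 2 * m)
    (T : Finset (Fin m)) (hT : T.card = v)
    (A : Finset (Fin (2 * m))) (hA : A.card = h) :
    ((univ.filter (fun σ : Fin (2 * m) ≃ (Fin m × Fin 2) =>
        ∀ j : Fin m, (j ∈ T ↔ (A.filter (fun x => (σ x).1 = j)).card = 1))).card : ℝ)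
      / (Fintype.card (Fin (2 * m) ≃ (Fin m × Fin 2)) : ℝ)
    = (if v ≤ h ∧ (h - v) % 2 = 0 then
        (2 ^ v * Nat.choose (m - v) ((h - v) / 2) : ℝ) else 0)
      / (Nat.choose (2 * m) h : ℝ) := by
  have hcard : Fintype.card (Fin (2 * m)) = Fintype.card (Fin m × Fin 2) := by simp [mul_comm]
  have hevent : ∀ σ : Fin (2 * m) ≃ (Fin m × Fin 2),
      (∀ j, (j ∈ T ↔ #{x ∈ A | (σ x).1 = j} = 1)) ↔ CrossesExactly T (A.map σ.toEmbedding) := by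
    intro σ
    simp [CrossesExactly, filter_map, card_map]
  rw [filter_congr fun σ _ => hevent σ, card_filter_equiv_map _ _ hcard,
    card_filter_card_eq_crossesExactly, Fintype.card_equiv (Fintype.equivOfCardEq hcard)]
  simp only [hA, hT, Fintype.card_fin]
  rw [← Nat.choose_mul_factorial_mul_factorial hh]
  split_ifs <;> push_cast
  · field_simp
  · simp

/-- Configuration model, conditioned on the active half-edges. There are `2m`
half-edges, `h` of which (the set `A`, the half-edges of a size-`u` vertex set
`S` of total degree `h`) are active. A uniformly random assignment
`σ : half-edges ≃ endpoint slots` (slots `Fin m × Fin 2`, one pair per function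
node/edge) is drawn. The probability that the set of crossing edges (edges with
exactly one active endpoint) is exactly a prescribed set `T` of `v` function
nodes equals `2^v C(m−v,(h−v)/2) / C(2m,h)` (with `C` vanishing on non-integer
or out-of-range arguments), independently of the choice of `A`. -/
theorem stmt16 (m v h : ℕ) (hv : v ≤ m) (hh : h ≤ 2 * m)
    (T : Finset (Fin m)) (hT : T.card = v)
    (A : Finset (Fin (2 * m))) (hA : A.card = h) :
    ((univ.filter (fun σ : Fin (2 * m) ≃ (Fin m × Fin 2) =>
        ∀ j : Fin m, (j ∈ T ↔ (A.filter (fun x => (σ x).1 = j)).card = 1))).card : ℝ)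
      / (Fintype.card (Fin (2 * m) ≃ (Fin m × Fin 2)) : ℝ)
    = (if v ≤ h ∧ (h - v) % 2 = 0 then
        (2 ^ v * Nat.choose (m - v) ((h - v) / 2) : ℝ) else 0)
      / (Nat.choose (2 * m) h : ℝ) :=
  stmt16_general m v h hh T hT A hA
end
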